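/- arXiv:1506.04133 — 2 statements merged into one kernel-verified Lean document; each statement's English description precedes it below -/
import Mathlib

section
/- Let Y = αX_1 + X_2 with α > 0, where X_1 is Bernoulli distributed with success probability p ∈ (0,1), X_2 is independent of X_1 with continuous distribution function F, and D^2 denotes the Cramér–von Mises index of Y with respect to X_2. Then D^2 = 1/6 − p(1−p)[1/2 − E[F(X_2 − α)]], where E[F(X_2 − α)] = ∫_ℝ F(t−α) dF(t) = P(X_2' + α ≤ X_2) for X_2' an independent copy of X_2. -/
open MeasureTheory Set Filter Topology
open scoped ENNReal
set_option maxHeartbeats 1000000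
lemma atomless_of_cdf_cont (μ : Measure ℝ) [IsProbabilityMeasure μ]
    (h : Continuous fun t => (μ (Iic t)).toReal) (x : ℝ) : μ {x} = 0 := by
  set G : ℝ → ℝ := fun t => (μ (Iic t)).toReal with hG
  have key : ∀ y < x, (μ {x}).toReal ≤ G x - G y := by
    intro y hy
    have hsub : {x} ⊆ Iic x \ Iic y := by
      intro z hz; rcases hz with rfl; exact ⟨mem_Iic.mpr le_rfl, by simpa using not_le.mpr hy⟩
    have h1 : (μ {x}).toReal ≤ (μ (Iic x \ Iic y)).toReal :=
      ENNReal.toReal_mono (measure_ne_top _ _) (measure_mono hsub)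
    have h2 : μ (Iic x \ Iic y) = μ (Iic x) - μ (Iic y) :=
      measure_diff (Iic_subset_Iic.mpr hy.le) measurableSet_Iic.nullMeasurableSet
        (measure_ne_top _ _)
    rw [h2, ENNReal.toReal_sub_of_le (measure_mono (Iic_subset_Iic.mpr hy.le))
      (measure_ne_top _ _)] at h1
    exact h1
  have hlim : Tendsto (fun y => G x - G y) (𝓝[<] x) (𝓝 0) := by
    have : Tendsto (fun y => G x - G y) (𝓝 x) (𝓝 (G x - G x)) :=
      (tendsto_const_nhds).sub (h.tendsto x)
    simpa using this.mono_left nhdsWithin_le_nhds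
  have hle : (μ {x}).toReal ≤ 0 :=
    ge_of_tendsto hlim (by
      filter_upwards [self_mem_nhdsWithin] with y hy
      exact key y hy)
  have := le_antisymm hle ENNReal.toReal_nonneg
  rwa [ENNReal.toReal_eq_zero_iff, or_iff_left (measure_ne_top _ _)] at this

lemma cdf_repr (μ ν : Measure ℝ) [IsProbabilityMeasure μ] [IsProbabilityMeasure ν] :
    ∫ t, (ν (Iic t)).toReal ∂μ = ((μ.prod ν) {p : ℝ × ℝ | p.2 ≤ p.1}).toReal := by
  have hS : MeasurableSet {p : ℝ × ℝ | p.2 ≤ p.1} := measurableSet_le measurable_snd measurable_fst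
  have hsec : ∀ t : ℝ, (Prod.mk t ⁻¹' {p : ℝ × ℝ | p.2 ≤ p.1}) = Iic t := fun t => rfl
  have hmeas : Measurable fun t => ν (Iic t) := by
    have := measurable_measure_prodMk_left (ν := ν) hS
    simpa [hsec] using this
  rw [Measure.prod_apply hS]
  simp_rw [hsec]
  rw [integral_toReal hmeas.aemeasurable]
  exact Filter.Eventually.of_forall fun t => (measure_lt_top ν _)

lemma cdf_swap (μ ν : Measure ℝ) [IsProbabilityMeasure μ] [IsProbabilityMeasure ν]
    (hν : ∀ x, ν {x} = 0) :
    (∫ t, (ν (Iic t)).toReal ∂μ) + (∫ s, (μ (Iic s)).toReal ∂ν) = 1 := by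
  have hS : MeasurableSet {p : ℝ × ℝ | p.2 ≤ p.1} := measurableSet_le measurable_snd measurable_fst
  have hS' : MeasurableSet {p : ℝ × ℝ | p.1 ≤ p.2} := measurableSet_le measurable_fst measurable_snd
  rw [cdf_repr μ ν, cdf_repr ν μ]
  have hswap : (ν.prod μ) {p : ℝ × ℝ | p.2 ≤ p.1} = (μ.prod ν) {p : ℝ × ℝ | p.1 ≤ p.2} := by
    rw [← (Measure.measurePreserving_swap (μ := μ) (ν := ν)).measure_preimage hS.nullMeasurableSet]
    rfl
  rw [hswap]
  have hunion : {p : ℝ × ℝ | p.2 ≤ p.1} ∪ {p : ℝ × ℝ | p.1 ≤ p.2} = univ := by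
    ext p; simp [le_total p.2 p.1]
  have hinter : (μ.prod ν) ({p : ℝ × ℝ | p.2 ≤ p.1} ∩ {p : ℝ × ℝ | p.1 ≤ p.2}) = 0 := by
    have : ({p : ℝ × ℝ | p.2 ≤ p.1} ∩ {p : ℝ × ℝ | p.1 ≤ p.2}) = {p : ℝ × ℝ | p.2 = p.1} := by
      ext p; simp only [mem_inter_iff, mem_setOf_eq]; constructor
      · rintro ⟨h1, h2⟩; exact le_antisymm h1 h2
      · rintro h; exact ⟨h.le, h.ge⟩
    rw [this, Measure.prod_apply (measurableSet_eq_fun measurable_snd measurable_fst)]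
    have : ∀ t : ℝ, (Prod.mk t ⁻¹' {p : ℝ × ℝ | p.2 = p.1}) = {t} := by
      intro t; ext s; simp [eq_comm]
    simp_rw [this, hν]
    simp
  have hadd : (μ.prod ν) {p : ℝ × ℝ | p.2 ≤ p.1} + (μ.prod ν) {p : ℝ × ℝ | p.1 ≤ p.2} = 1 := by
    rw [← measure_union_add_inter _ hS', hinter, hunion]
    simp
  rw [← ENNReal.toReal_add (measure_ne_top _ _) (measure_ne_top _ _), hadd]
  simp

section third
variable (ν : Measure ℝ) [IsProbabilityMeasure ν]

private lemma meas_x21 : Measurable fun x : ℝ × ℝ × ℝ => x.2.1 := measurable_fst.comp measurable_snd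
private lemma meas_x22 : Measurable fun x : ℝ × ℝ × ℝ => x.2.2 := measurable_snd.comp measurable_snd

lemma cdf_sq_eq_third (hν : ∀ x : ℝ, ν {x} = 0) :
    ∫ t, ((ν (Iic t)).toReal) ^ 2 ∂ν = 1 / 3 := by
  set π := ν.prod (ν.prod ν) with hπ
  set S : Set (ℝ × ℝ × ℝ) := {x | x.2.1 ≤ x.1 ∧ x.2.2 ≤ x.1} with hSdef
  have hS : MeasurableSet S :=
    (measurableSet_le (meas_x21) measurable_fst).inter (measurableSet_le (meas_x22) measurable_fst)
  -- Step A : the integral is (π S).toReal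
  have hsec : ∀ t : ℝ, (Prod.mk t ⁻¹' S) = Iic t ×ˢ Iic t := by
    intro t; ext y; simp [hSdef, Set.mem_prod, and_comm, Prod.le_def]
  have hrepr : ∫ t, ((ν (Iic t)).toReal) ^ 2 ∂ν = (π S).toReal := by
    have hmeas : Measurable fun t => ν (Iic t) * ν (Iic t) := by
      have := measurable_measure_prodMk_left (ν := ν.prod ν) hS
      simpa only [hsec, Measure.prod_prod] using this
    have h1 : ∫ t, ((ν (Iic t)).toReal) ^ 2 ∂ν = ∫ t, ((ν (Iic t) * ν (Iic t)).toReal) ∂ν := by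
      congr 1; funext t; rw [ENNReal.toReal_mul]; ring
    rw [h1, integral_toReal hmeas.aemeasurable (Filter.Eventually.of_forall fun t =>
        ENNReal.mul_lt_top (measure_lt_top _ _) (measure_lt_top _ _)), hπ, Measure.prod_apply hS]
    simp_rw [hsec, Measure.prod_prod]
  -- the three strict-max sets
  set Ma : Set (ℝ × ℝ × ℝ) := {x | x.2.1 < x.1 ∧ x.2.2 < x.1} with hMa
  set Mb : Set (ℝ × ℝ × ℝ) := {x | x.1 < x.2.1 ∧ x.2.2 < x.2.1} with hMb
  set Mc : Set (ℝ × ℝ × ℝ) := {x | x.1 < x.2.2 ∧ x.2.1 < x.2.2} with hMc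
  have hMam : MeasurableSet Ma :=
    (measurableSet_lt meas_x21 measurable_fst).inter (measurableSet_lt meas_x22 measurable_fst)
  have hMbm : MeasurableSet Mb :=
    (measurableSet_lt measurable_fst meas_x21).inter (measurableSet_lt meas_x22 meas_x21)
  have hMcm : MeasurableSet Mc :=
    (measurableSet_lt measurable_fst meas_x22).inter (measurableSet_lt meas_x21 meas_x22)
  -- equality sets are null
  have hE12 : π {x : ℝ × ℝ × ℝ | x.1 = x.2.1} = 0 := by
    rw [hπ, Measure.prod_apply (measurableSet_eq_fun measurable_fst meas_x21)]
    have h : ∀ t : ℝ, (Prod.mk t ⁻¹' {x : ℝ × ℝ × ℝ | x.1 = x.2.1}) = {t} ×ˢ (univ : Set ℝ) := by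
      intro t; ext y; simp [Set.mem_prod, Prod.ext_iff, eq_comm]
    simp_rw [h, Measure.prod_prod, hν]
    simp
  have hE13 : π {x : ℝ × ℝ × ℝ | x.1 = x.2.2} = 0 := by
    rw [hπ, Measure.prod_apply (measurableSet_eq_fun measurable_fst meas_x22)]
    have h : ∀ t : ℝ, (Prod.mk t ⁻¹' {x : ℝ × ℝ × ℝ | x.1 = x.2.2}) = (univ : Set ℝ) ×ˢ {t} := by
      intro t; ext y; simp [Set.mem_prod, Prod.ext_iff, eq_comm]
    simp_rw [h, Measure.prod_prod, hν]
    simp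
  have hE23 : π {x : ℝ × ℝ × ℝ | x.2.1 = x.2.2} = 0 := by
    rw [hπ, Measure.prod_apply (measurableSet_eq_fun meas_x21 meas_x22)]
    have h : ∀ t : ℝ, (Prod.mk t ⁻¹' {x : ℝ × ℝ × ℝ | x.2.1 = x.2.2})
        = {y : ℝ × ℝ | y.1 = y.2} := by intro t; rfl
    simp_rw [h]
    have hdiag : (ν.prod ν) {y : ℝ × ℝ | y.1 = y.2} = 0 := by
      rw [Measure.prod_apply (measurableSet_eq_fun measurable_fst measurable_snd)]
      have h2 : ∀ s : ℝ, (Prod.mk s ⁻¹' {y : ℝ × ℝ | y.1 = y.2}) = {s} := by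
        intro s; ext z; simp [eq_comm]
      simp_rw [h2, hν]; simp
    simp [hdiag]
  -- measure preserving permutations
  have hσab : MeasurePreserving (fun x : ℝ × ℝ × ℝ => (x.2.1, (x.1, x.2.2))) π π := by
    have h1 : MeasurePreserving (MeasurableEquiv.prodAssoc :
        (ℝ × ℝ) × ℝ ≃ᵐ ℝ × ℝ × ℝ) ((ν.prod ν).prod ν) π :=
      measurePreserving_prodAssoc ν ν ν
    have h2 : MeasurePreserving (Prod.map (Prod.swap : ℝ × ℝ → ℝ × ℝ) (id : ℝ → ℝ))
        ((ν.prod ν).prod ν) ((ν.prod ν).prod ν) :=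
      (Measure.measurePreserving_swap).prod (MeasurePreserving.id ν)
    exact (h1.comp h2).comp h1.symm
  have hσbc : MeasurePreserving (fun x : ℝ × ℝ × ℝ => (x.1, (x.2.2, x.2.1))) π π :=
    (MeasurePreserving.id ν).prod (Measure.measurePreserving_swap (μ := ν) (ν := ν))
  have hτ : MeasurePreserving (fun x : ℝ × ℝ × ℝ => (x.2.2, (x.1, x.2.1))) π π :=
    hσab.comp hσbc
  have hMbMa : π Mb = π Ma := by
    rw [← hσab.measure_preimage hMam.nullMeasurableSet]
    rfl
  have hMcMa : π Mc = π Ma := by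
    rw [← hτ.measure_preimage hMam.nullMeasurableSet]
    rfl
  -- cover
  have hcover : (univ : Set (ℝ × ℝ × ℝ)) ⊆ Ma ∪ Mb ∪ Mc ∪
      ({x : ℝ × ℝ × ℝ | x.1 = x.2.1} ∪ {x : ℝ × ℝ × ℝ | x.1 = x.2.2}
        ∪ {x : ℝ × ℝ × ℝ | x.2.1 = x.2.2}) := by
    rintro ⟨a, b, c⟩ -
    simp only [hMa, hMb, hMc, mem_union, mem_setOf_eq]
    rcases lt_trichotomy a b with h1 | h1 | h1 <;> rcases lt_trichotomy a c with h2 | h2 | h2 <;>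
      rcases lt_trichotomy b c with h3 | h3 | h3 <;> first | tauto | (exfalso; linarith)
  -- disjointness
  have hd1 : Disjoint Ma Mb := by
    rw [Set.disjoint_left]; rintro x ⟨h1, -⟩ ⟨h2, -⟩; exact absurd (h1.trans h2) (lt_irrefl _)
  have hd2 : Disjoint Ma Mc := by
    rw [Set.disjoint_left]; rintro x ⟨-, h1⟩ ⟨h2, -⟩; exact absurd (h1.trans h2) (lt_irrefl _)
  have hd3 : Disjoint Mb Mc := by
    rw [Set.disjoint_left]; rintro x ⟨-, h1⟩ ⟨-, h2⟩; exact absurd (h1.trans h2) (lt_irrefl _)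
  have hU : π (Ma ∪ Mb ∪ Mc) = π Ma + π Mb + π Mc := by
    rw [measure_union (Disjoint.union_left hd2 hd3) hMcm,
      measure_union hd1 hMbm]
  have hE : π ({x : ℝ × ℝ × ℝ | x.1 = x.2.1} ∪ {x : ℝ × ℝ × ℝ | x.1 = x.2.2}
      ∪ {x : ℝ × ℝ × ℝ | x.2.1 = x.2.2}) = 0 :=
    measure_union_null (measure_union_null hE12 hE13) hE23
  have hone : π (Ma ∪ Mb ∪ Mc) = 1 := by
    refine le_antisymm prob_le_one ?_
    have h1 : π univ ≤ π (Ma ∪ Mb ∪ Mc) + π ({x : ℝ × ℝ × ℝ | x.1 = x.2.1}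
        ∪ {x : ℝ × ℝ × ℝ | x.1 = x.2.2} ∪ {x : ℝ × ℝ × ℝ | x.2.1 = x.2.2}) :=
      le_trans (measure_mono hcover) (measure_union_le _ _)
    rw [hE, add_zero, measure_univ] at h1
    exact h1
  have hMa3 : (3 : ℝ≥0∞) * π Ma = 1 := by
    rw [← hone, hU, hMbMa, hMcMa]; ring
  have hSMa : π S = π Ma := by
    refine le_antisymm ?_ (measure_mono ?_)
    · have hsub : S ⊆ Ma ∪ ({x : ℝ × ℝ × ℝ | x.1 = x.2.1} ∪ {x : ℝ × ℝ × ℝ | x.1 = x.2.2}) := by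
        rintro ⟨a, b, c⟩ ⟨h1, h2⟩
        simp only [hMa, mem_union, mem_setOf_eq]
        rcases lt_or_eq_of_le h1 with h1' | h1'
        · rcases lt_or_eq_of_le h2 with h2' | h2'
          · exact Or.inl ⟨h1', h2'⟩
          · exact Or.inr (Or.inr h2'.symm)
        · exact Or.inr (Or.inl h1'.symm)
      have h1 : π S ≤ π Ma + π ({x : ℝ × ℝ × ℝ | x.1 = x.2.1}
          ∪ {x : ℝ × ℝ × ℝ | x.1 = x.2.2}) :=
        le_trans (measure_mono hsub) (measure_union_le _ _)
      rwa [measure_union_null hE12 hE13, add_zero] at h1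
    · rintro ⟨a, b, c⟩ ⟨h1, h2⟩
      exact ⟨h1.le, h2.le⟩
  have hMaval : π Ma = 1 / 3 := by
    rw [ENNReal.eq_div_iff (by norm_num) (by norm_num)]
    exact hMa3
  rw [hrepr, hSMa, hMaval]
  norm_num [ENNReal.toReal_div]
end third

lemma bern_prod (p : ℝ) (μ : Measure ℝ) [SFinite μ] {S : Set (ℝ × ℝ)} (hS : MeasurableSet S) :
    ((ENNReal.ofReal p • Measure.dirac (1 : ℝ)
        + ENNReal.ofReal (1 - p) • Measure.dirac (0 : ℝ)).prod μ) S
      = ENNReal.ofReal p * μ {b | (1, b) ∈ S} + ENNReal.ofReal (1 - p) * μ {b | (0, b) ∈ S} := by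
  have hmeas := measurable_measure_prodMk_left (ν := μ) hS
  rw [Measure.prod_apply hS, lintegral_add_measure, lintegral_smul_measure,
    lintegral_smul_measure, lintegral_dirac' _ hmeas, lintegral_dirac' _ hmeas]
  rfl

lemma integrable_of_bdd {ν : Measure ℝ} [IsFiniteMeasure ν] {f : ℝ → ℝ} (hf : Continuous f)
    (C : ℝ) (h : ∀ x, |f x| ≤ C) : Integrable f ν :=
  Integrable.mono' (integrable_const C) hf.aestronglyMeasurable (ae_of_all _ h)

open MeasureTheory ProbabilityTheory Filter

/-- **Cramér–von Mises index of `Y = αX₁ + X₂` with respect to the input `X₂`.**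
`D² = 1/6 − p(1−p) [1/2 − E[F(X₂ − α)]]`. -/
theorem cramer_von_mises_bernoulli_second_input
    {Ω : Type*} [m0 : MeasurableSpace Ω] (P : Measure Ω) [IsProbabilityMeasure P]
    (α p : ℝ) (hα : 0 < α) (hp0 : 0 < p) (hp1 : p < 1)
    (X1 X2 : Ω → ℝ) (hX1 : Measurable X1) (hX2 : Measurable X2)
    (hX1law : Measure.map X1 P
      = ENNReal.ofReal p • Measure.dirac (1 : ℝ)
        + ENNReal.ofReal (1 - p) • Measure.dirac (0 : ℝ))
    (hindep : IndepFun X1 X2 P)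
    (F : ℝ → ℝ) (hF : ∀ t, F t = (P {ω | X2 ω ≤ t}).toReal) (hFcont : Continuous F)
    (Y : Ω → ℝ) (hY : ∀ ω, Y ω = α * X1 ω + X2 ω)
    (FY : ℝ → ℝ) (hFY : ∀ t, FY t = (P {ω | Y ω ≤ t}).toReal)
    (D2 : ℝ)
    (hD2 : D2 = ∫ t, (∫ ω,
      (FY t - (MeasureTheory.condExp
        (MeasurableSpace.comap X2 inferInstance) P
        (Set.indicator {ω' | Y ω' ≤ t} fun _ => (1 : ℝ))) ω) ^ 2 ∂P)
      ∂(Measure.map Y P)) :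
    D2 = 1 / 6 - p * (1 - p) * (1 / 2 - ∫ ω, F (X2 ω - α) ∂P) := by
  have hp1' : (0:ℝ) ≤ 1 - p := by linarith
  have hYm : Measurable Y := by
    have hYfun : Y = fun ω => α * X1 ω + X2 ω := funext hY
    rw [hYfun]; exact (measurable_const.mul hX1).add hX2
  set μ : Measure ℝ := Measure.map X2 P with hμ
  haveI : IsProbabilityMeasure μ := Measure.isProbabilityMeasure_map hX2.aemeasurable
  have hμIic : ∀ s : ℝ, μ (Iic s) = P {ω | X2 ω ≤ s} := by
    intro s; rw [hμ, Measure.map_apply hX2 measurableSet_Iic]; rfl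
  have hFμ : ∀ t, F t = (μ (Iic t)).toReal := by intro t; rw [hF, hμIic]
  have hFcontμ : Continuous fun t => (μ (Iic t)).toReal := by
    have h : (fun t => (μ (Iic t)).toReal) = F := funext fun t => (hFμ t).symm
    rw [h]; exact hFcont
  have hatom : ∀ x : ℝ, μ {x} = 0 := atomless_of_cdf_cont μ hFcontμ
  -- joint law and a formula for P of pair-preimages
  have hjoint : Measure.map (fun ω => (X1 ω, X2 ω)) P = (Measure.map X1 P).prod μ :=
    (ProbabilityTheory.indepFun_iff_map_prod_eq_prod_map_map hX1.aemeasurable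
      hX2.aemeasurable).mp hindep
  have hPS : ∀ S : Set (ℝ × ℝ), MeasurableSet S →
      P ((fun ω => (X1 ω, X2 ω)) ⁻¹' S)
        = ENNReal.ofReal p * μ {b | ((1:ℝ), b) ∈ S}
          + ENNReal.ofReal (1 - p) * μ {b | ((0:ℝ), b) ∈ S} := by
    intro S hS
    rw [← Measure.map_apply (hX1.prodMk hX2) hS, hjoint, hX1law, bern_prod p μ hS]
  -- the shifted measure
  set νs : Measure ℝ := Measure.map (fun b => α + b) μ with hνs
  haveI : IsProbabilityMeasure νs := Measure.isProbabilityMeasure_map (measurable_const_add α).aemeasurable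
  have hνsIic : ∀ t, νs (Iic t) = μ (Iic (t - α)) := by
    intro t; rw [hνs, Measure.map_apply (measurable_const_add α) measurableSet_Iic]
    congr 1; ext b
    simp only [Set.mem_preimage, Set.mem_Iic]
    constructor <;> intro h <;> linarith
  have hνsatom : ∀ x : ℝ, νs {x} = 0 := by
    intro x
    rw [hνs, Measure.map_apply (measurable_const_add α) (measurableSet_singleton x)]
    have h : (fun b => α + b) ⁻¹' {x} = {x - α} := by
      ext b; simp only [Set.mem_preimage, Set.mem_singleton_iff]
      constructor <;> intro h <;> linarith
    rw [h]; exact hatom _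
  -- law of Y
  set νY : Measure ℝ := Measure.map Y P with hνYdef
  haveI : IsProbabilityMeasure νY := Measure.isProbabilityMeasure_map hYm.aemeasurable
  have hνY : νY = ENNReal.ofReal p • νs + ENNReal.ofReal (1 - p) • μ := by
    ext s hs
    rw [hνYdef, Measure.map_apply hYm hs]
    have hSm : MeasurableSet {q : ℝ × ℝ | α * q.1 + q.2 ∈ s} :=
      ((measurable_const.mul measurable_fst).add measurable_snd) hs
    have hpre : Y ⁻¹' s = (fun ω => (X1 ω, X2 ω)) ⁻¹' {q : ℝ × ℝ | α * q.1 + q.2 ∈ s} := by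
      ext ω; simp only [Set.mem_preimage, Set.mem_setOf_eq, hY ω]
    rw [hpre, hPS _ hSm]
    have h1 : {b : ℝ | ((1:ℝ), b) ∈ {q : ℝ × ℝ | α * q.1 + q.2 ∈ s}} = (fun b => α + b) ⁻¹' s := by
      ext b; simp only [Set.mem_setOf_eq, Set.mem_preimage, mul_one]
    have h0 : {b : ℝ | ((0:ℝ), b) ∈ {q : ℝ × ℝ | α * q.1 + q.2 ∈ s}} = s := by
      ext b; simp only [Set.mem_setOf_eq, mul_zero, zero_add]
    rw [h1, h0]
    simp only [Measure.add_apply, Measure.smul_apply, smul_eq_mul]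
    rw [hνs, Measure.map_apply (measurable_const_add α) hs]
  have hFYIic : ∀ t, FY t = (νY (Iic t)).toReal := by
    intro t; rw [hFY, hνYdef, Measure.map_apply hYm measurableSet_Iic]; rfl
  have hFYeq : ∀ t, FY t = p * F (t - α) + (1 - p) * F t := by
    intro t
    rw [hFYIic t, hνY]
    simp only [Measure.add_apply, Measure.smul_apply, smul_eq_mul]
    rw [hνsIic, ENNReal.toReal_add (ENNReal.mul_ne_top ENNReal.ofReal_ne_top (measure_ne_top _ _))
      (ENNReal.mul_ne_top ENNReal.ofReal_ne_top (measure_ne_top _ _)),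
      ENNReal.toReal_mul, ENNReal.toReal_mul, ENNReal.toReal_ofReal hp0.le,
      ENNReal.toReal_ofReal hp1', hFμ (t - α), hFμ t]
  have hFYcont : Continuous FY := by
    have h : FY = fun t => p * F (t - α) + (1 - p) * F t := funext hFYeq
    rw [h]
    exact (continuous_const.mul (hFcont.comp (continuous_id.sub continuous_const))).add
      (continuous_const.mul hFcont)
  have hνYatom : ∀ x : ℝ, νY {x} = 0 := by
    refine atomless_of_cdf_cont νY ?_
    have h : (fun t => (νY (Iic t)).toReal) = FY := funext fun t => (hFYIic t).symm
    rw [h]; exact hFYcont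
  -- bounds
  have hF0 : ∀ s, 0 ≤ F s := fun s => by rw [hF]; exact ENNReal.toReal_nonneg
  have hF1 : ∀ s, F s ≤ 1 := by
    intro s; rw [hF]
    have := ENNReal.toReal_mono (ENNReal.one_ne_top) (prob_le_one (μ := P) (s := {ω | X2 ω ≤ s}))
    simpa using this
  have hFY0 : ∀ s, 0 ≤ FY s := fun s => by rw [hFY]; exact ENNReal.toReal_nonneg
  have hFY1 : ∀ s, FY s ≤ 1 := by
    intro s; rw [hFY]
    have := ENNReal.toReal_mono (ENNReal.one_ne_top) (prob_le_one (μ := P) (s := {ω | Y ω ≤ s}))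
    simpa using this
  -- the inner integral
  have hinner : ∀ t : ℝ, (∫ ω,
      (FY t - (MeasureTheory.condExp (MeasurableSpace.comap X2 inferInstance) P
        (Set.indicator {ω' | Y ω' ≤ t} fun _ => (1 : ℝ))) ω) ^ 2 ∂P)
      = ((2*p - p^2) * F (t - α) + (1-p)^2 * F t) - (FY t)^2 := by
    intro t
    set A : Set Ω := X2 ⁻¹' (Set.Iic (t - α)) with hA
    set B : Set Ω := X2 ⁻¹' (Set.Iic t) with hB
    have hAB : A ⊆ B := fun ω h => by
      simp only [hA, hB, Set.mem_preimage, Set.mem_Iic] at *; linarith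
    have hAm0 : MeasurableSet A := hX2 measurableSet_Iic
    have hBm0 : MeasurableSet B := hX2 measurableSet_Iic
    set g : Ω → ℝ := fun ω => p * A.indicator (fun _ => (1:ℝ)) ω
      + (1 - p) * B.indicator (fun _ => (1:ℝ)) ω with hg
    set f : Ω → ℝ := Set.indicator {ω' | Y ω' ≤ t} (fun _ => (1:ℝ)) with hfdef
    have hYtm : MeasurableSet {ω' | Y ω' ≤ t} := hYm measurableSet_Iic
    have hf_int : Integrable f P := (integrable_const (1:ℝ)).indicator hYtm
    have hIA_int : Integrable (A.indicator (fun _ => (1:ℝ))) P :=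
      (integrable_const (1:ℝ)).indicator hAm0
    have hIB_int : Integrable (B.indicator (fun _ => (1:ℝ))) P :=
      (integrable_const (1:ℝ)).indicator hBm0
    have hg_int : Integrable g P := (hIA_int.const_mul p).add (hIB_int.const_mul (1 - p))
    have key : ∀ u : Set ℝ, MeasurableSet u →
        P ({ω' | Y ω' ≤ t} ∩ X2 ⁻¹' u)
          = ENNReal.ofReal p * μ (Set.Iic (t - α) ∩ u)
            + ENNReal.ofReal (1 - p) * μ (Set.Iic t ∩ u) := by
      intro u hu
      have hSm : MeasurableSet {q : ℝ × ℝ | α * q.1 + q.2 ≤ t ∧ q.2 ∈ u} :=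
        (measurableSet_le ((measurable_const.mul measurable_fst).add measurable_snd)
          measurable_const).inter (measurable_snd hu)
      have hpre : {ω' | Y ω' ≤ t} ∩ X2 ⁻¹' u
          = (fun ω => (X1 ω, X2 ω)) ⁻¹' {q : ℝ × ℝ | α * q.1 + q.2 ≤ t ∧ q.2 ∈ u} := by
        ext ω
        simp only [Set.mem_inter_iff, Set.mem_setOf_eq, Set.mem_preimage, hY ω]
      have hs1 : {b : ℝ | ((1:ℝ), b) ∈ {q : ℝ × ℝ | α * q.1 + q.2 ≤ t ∧ q.2 ∈ u}}
          = Set.Iic (t - α) ∩ u := by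
        ext b
        simp only [Set.mem_setOf_eq, Set.mem_inter_iff, Set.mem_Iic, mul_one]
        constructor <;> rintro ⟨h1, h2⟩ <;> exact ⟨by linarith, h2⟩
      have hs0 : {b : ℝ | ((0:ℝ), b) ∈ {q : ℝ × ℝ | α * q.1 + q.2 ≤ t ∧ q.2 ∈ u}}
          = Set.Iic t ∩ u := by
        ext b
        simp only [Set.mem_setOf_eq, Set.mem_inter_iff, Set.mem_Iic, mul_zero, zero_add]
      rw [hpre, hPS _ hSm, hs1, hs0]
    have hg_eq : ∀ s : Set Ω, MeasurableSet[MeasurableSpace.comap X2 inferInstance] s →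
        P s < ⊤ → ∫ x in s, g x ∂P = ∫ x in s, f x ∂P := by
      rintro s ⟨u, hu, rfl⟩ -
      have hfeq : ∫ x in X2 ⁻¹' u, f x ∂P = (P ({ω' | Y ω' ≤ t} ∩ X2 ⁻¹' u)).toReal := by
        rw [hfdef, setIntegral_indicator hYtm, setIntegral_const, smul_eq_mul, mul_one,
          Set.inter_comm]
        rfl
      have hgeq : ∫ x in X2 ⁻¹' u, g x ∂P
          = p * (P (A ∩ X2 ⁻¹' u)).toReal + (1 - p) * (P (B ∩ X2 ⁻¹' u)).toReal := by
        rw [hg, integral_add ((hIA_int.const_mul p).integrableOn)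
          ((hIB_int.const_mul (1 - p)).integrableOn), integral_const_mul, integral_const_mul,
          setIntegral_indicator hAm0, setIntegral_indicator hBm0, setIntegral_const,
          setIntegral_const, smul_eq_mul, smul_eq_mul, mul_one, mul_one,
          Set.inter_comm _ A, Set.inter_comm _ B]
        rfl
      rw [hfeq, hgeq, key u hu]
      have hPA : P (A ∩ X2 ⁻¹' u) = μ (Set.Iic (t - α) ∩ u) := by
        rw [hμ, Measure.map_apply hX2 (measurableSet_Iic.inter hu), Set.preimage_inter]
      have hPB : P (B ∩ X2 ⁻¹' u) = μ (Set.Iic t ∩ u) := by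
        rw [hμ, Measure.map_apply hX2 (measurableSet_Iic.inter hu), Set.preimage_inter]
      rw [hPA, hPB, ENNReal.toReal_add (ENNReal.mul_ne_top ENNReal.ofReal_ne_top
        (measure_ne_top _ _)) (ENNReal.mul_ne_top ENNReal.ofReal_ne_top (measure_ne_top _ _)),
        ENNReal.toReal_mul, ENNReal.toReal_mul, ENNReal.toReal_ofReal hp0.le,
        ENNReal.toReal_ofReal hp1']
    have hcond : g =ᵐ[P] MeasureTheory.condExp (MeasurableSpace.comap X2 inferInstance) P f := by
      have hm : MeasurableSpace.comap X2 inferInstance ≤ m0 := hX2.comap_le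
      haveI : SigmaFinite (P.trim hm) := inferInstance
      refine ae_eq_condExp_of_forall_setIntegral_eq hm hf_int
        (fun s _ _ => hg_int.integrableOn) hg_eq ?_
      refine StronglyMeasurable.aestronglyMeasurable ?_
      have hAm : MeasurableSet[MeasurableSpace.comap X2 inferInstance] A :=
        ⟨Set.Iic (t - α), measurableSet_Iic, rfl⟩
      have hBm : MeasurableSet[MeasurableSpace.comap X2 inferInstance] B :=
        ⟨Set.Iic t, measurableSet_Iic, rfl⟩
      exact (stronglyMeasurable_const.mul (stronglyMeasurable_const.indicator hAm)).add
        (stronglyMeasurable_const.mul (stronglyMeasurable_const.indicator hBm))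
    have hae : (fun ω => (FY t - (MeasureTheory.condExp
        (MeasurableSpace.comap X2 inferInstance) P f) ω) ^ 2)
        =ᵐ[P] fun ω => (FY t - g ω) ^ 2 := by
      filter_upwards [hcond] with ω h
      rw [← h]
    rw [integral_congr_ae hae]
    have hexp : (fun ω => (FY t - g ω) ^ 2)
        = fun ω => ((FY t)^2 + (2*p - p^2 - 2*(FY t)*p) * A.indicator (fun _ => (1:ℝ)) ω)
          + ((1-p)^2 - 2*(FY t)*(1-p)) * B.indicator (fun _ => (1:ℝ)) ω := by
      funext ω
      by_cases h1 : ω ∈ A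
      · have h2 : ω ∈ B := hAB h1
        simp only [hg, Set.indicator_of_mem h1, Set.indicator_of_mem h2]
        ring
      · by_cases h2 : ω ∈ B
        · simp only [hg, Set.indicator_of_notMem h1, Set.indicator_of_mem h2]
          ring
        · simp only [hg, Set.indicator_of_notMem h1, Set.indicator_of_notMem h2]
          ring
    rw [hexp]
    have hi1 : Integrable (fun ω => (FY t)^2
        + (2*p - p^2 - 2*(FY t)*p) * A.indicator (fun _ => (1:ℝ)) ω) P :=
      (integrable_const _).add (hIA_int.const_mul _)
    have hi2 : Integrable (fun ω => ((1-p)^2 - 2*(FY t)*(1-p))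
        * B.indicator (fun _ => (1:ℝ)) ω) P := hIB_int.const_mul _
    rw [integral_add hi1 hi2, integral_add (integrable_const _) (hIA_int.const_mul _),
      integral_const, integral_const_mul, integral_const_mul,
      integral_indicator_const _ hAm0, integral_indicator_const _ hBm0]
    simp only [measureReal_def, measure_univ, ENNReal.toReal_one, one_smul, smul_eq_mul, mul_one]
    have hPA : (P A).toReal = F (t - α) := by rw [hF]; rfl
    have hPB : (P B).toReal = F t := by rw [hF]; rfl
    rw [hPA, hPB]
    have hfy := hFYeq t
    linear_combination (2 * FY t) * hfy
  -- outer integral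
  rw [hD2]
  have hfun : (fun t => ∫ ω,
      (FY t - (MeasureTheory.condExp (MeasurableSpace.comap X2 inferInstance) P
        (Set.indicator {ω' | Y ω' ≤ t} fun _ => (1 : ℝ))) ω) ^ 2 ∂P)
      = fun t => ((2*p - p^2) * F (t - α) + (1-p)^2 * F t) - (FY t)^2 := funext hinner
  rw [hfun]
  set W : ℝ → ℝ := fun t => (2*p - p^2) * F (t - α) + (1-p)^2 * F t with hW
  have hWcont : Continuous W :=
    (continuous_const.mul (hFcont.comp (continuous_id.sub continuous_const))).add
      (continuous_const.mul hFcont)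
  have hWbdd : ∀ x, |W x| ≤ |2*p - p^2| + (1-p)^2 := by
    intro x
    have h1 : |(2*p - p^2) * F (x - α)| ≤ |2*p - p^2| := by
      rw [abs_mul]
      calc |2*p - p^2| * |F (x - α)| ≤ |2*p - p^2| * 1 := by
            apply mul_le_mul_of_nonneg_left _ (abs_nonneg _)
            rw [abs_of_nonneg (hF0 _)]; exact hF1 _
        _ = |2*p - p^2| := mul_one _
    have h2 : |(1-p)^2 * F x| ≤ (1-p)^2 := by
      rw [abs_mul, abs_of_nonneg (sq_nonneg (1-p))]
      calc (1-p)^2 * |F x| ≤ (1-p)^2 * 1 := by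
            apply mul_le_mul_of_nonneg_left _ (sq_nonneg _)
            rw [abs_of_nonneg (hF0 _)]; exact hF1 _
        _ = (1-p)^2 := mul_one _
    calc |W x| ≤ |(2*p - p^2) * F (x - α)| + |(1-p)^2 * F x| := abs_add_le _ _
      _ ≤ |2*p - p^2| + (1-p)^2 := add_le_add h1 h2
  have hWint : ∀ (ρ : Measure ℝ) [IsFiniteMeasure ρ], Integrable W ρ := by
    intro ρ _; exact integrable_of_bdd hWcont _ hWbdd
  have hFY2cont : Continuous fun t => (FY t)^2 := (hFYcont.pow 2)
  have hFY2int : Integrable (fun t => (FY t)^2) νY := by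
    refine integrable_of_bdd hFY2cont 1 ?_
    intro x
    rw [abs_of_nonneg (sq_nonneg _)]
    nlinarith [hFY0 x, hFY1 x]
  rw [integral_sub (hWint νY) hFY2int]
  -- ∫ FY² = 1/3
  have hthird : ∫ t, (FY t)^2 ∂νY = 1/3 := by
    have h : (fun t => (FY t)^2) = fun t => ((νY (Iic t)).toReal)^2 :=
      funext fun t => by rw [hFYIic]
    rw [h]
    exact cdf_sq_eq_third νY hνYatom
  -- ∫ W over νY
  have hWνY : ∫ t, W t ∂νY
      = p * (∫ t, W t ∂νs) + (1 - p) * (∫ t, W t ∂μ) := by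
    rw [hνY, integral_add_measure ((hWint νs).smul_measure ENNReal.ofReal_ne_top)
      ((hWint μ).smul_measure ENNReal.ofReal_ne_top), integral_smul_measure,
      integral_smul_measure, ENNReal.toReal_ofReal hp0.le, ENNReal.toReal_ofReal hp1']
    rfl
  -- scalar integrals
  set q : ℝ := ∫ b, F (b - α) ∂μ with hq
  set r : ℝ := ∫ b, F (α + b) ∂μ with hr
  have hIF : ∫ b, F b ∂μ = 1/2 := by
    have h := cdf_swap μ μ hatom
    have he : (fun t => (μ (Iic t)).toReal) = F := funext fun t => (hFμ t).symm
    rw [he] at h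
    linarith
  have hqr : q + r = 1 := by
    have h := cdf_swap μ νs hνsatom
    have h1 : (fun t => (νs (Iic t)).toReal) = fun t => F (t - α) := by
      funext t; rw [hνsIic, ← hFμ]
    have h2 : ∫ s, (μ (Iic s)).toReal ∂νs = ∫ b, F (α + b) ∂μ := by
      rw [hνs, integral_map (measurable_const_add α).aemeasurable
        (hFcontμ.aestronglyMeasurable)]
      congr 1; funext b; rw [← hFμ]
    rw [h1, h2] at h
    exact h
  have hFint : ∀ (ρ : Measure ℝ) [IsFiniteMeasure ρ], ∀ (c : ℝ),
      Integrable (fun b => F (b - c)) ρ := by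
    intro ρ _ c
    refine integrable_of_bdd (hFcont.comp (continuous_id.sub continuous_const)) 1 ?_
    intro x
    rw [abs_of_nonneg (hF0 _)]; exact hF1 _
  have hFint' : ∀ (ρ : Measure ℝ) [IsFiniteMeasure ρ],
      Integrable (fun b => F (α + b)) ρ := by
    intro ρ _
    refine integrable_of_bdd (hFcont.comp (continuous_const.add continuous_id)) 1 ?_
    intro x
    rw [abs_of_nonneg (hF0 _)]; exact hF1 _
  have hWμ : ∫ t, W t ∂μ = (2*p - p^2) * q + (1-p)^2 * (1/2) := by
    rw [hW]
    rw [integral_add ((hFint μ α).const_mul _) (by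
      simpa using ((hFint μ 0).const_mul ((1-p)^2))), integral_const_mul, integral_const_mul]
    have h0 : ∫ b, F b ∂μ = 1/2 := hIF
    rw [h0, hq]
  have hWνs : ∫ t, W t ∂νs = (2*p - p^2) * (1/2) + (1-p)^2 * r := by
    rw [hνs, integral_map (measurable_const_add α).aemeasurable hWcont.aestronglyMeasurable]
    have h : (fun b => W (α + b)) = fun b => (2*p - p^2) * F b + (1-p)^2 * F (α + b) := by
      funext b; simp only [hW]
      rw [show α + b - α = b by ring]
    rw [h, integral_add (by simpa using ((hFint μ 0).const_mul (2*p - p^2)))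
      ((hFint' μ).const_mul _), integral_const_mul, integral_const_mul, hIF, hr]
  -- the RHS integral
  have hRHS : ∫ ω, F (X2 ω - α) ∂P = q := by
    have hsm : AEStronglyMeasurable (fun b : ℝ => F (b - α)) (Measure.map X2 P) :=
      ((hFcont.comp (continuous_id.sub continuous_const) :
        Continuous fun b : ℝ => F (b - α))).aestronglyMeasurable
    rw [hq, hμ, integral_map hX2.aemeasurable hsm]
  rw [hWνY, hWμ, hWνs, hthird, hRHS]
  have hrq : r = 1 - q := by linarith
  rw [hrq]
  ring
end

section
/- Let U, U', V be independent standard Gaussian random variables. Then for every a ∈ ℝ, P(U ≤ aV and U' ≤ aV) = (1/π) arctan(√(1 + 2a²)). -/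
open MeasureTheory ProbabilityTheory Filter

open Real Set
open scoped NNReal ENNReal

noncomputable def gphi : ℝ → ℝ := fun x => (Real.sqrt (2 * Real.pi))⁻¹ * Real.exp (-(x^2)/2)

lemma gphi_eq_pdf (x : ℝ) : gphi x = gaussianPDFReal 0 1 x := by
  simp [gphi, gaussianPDFReal]

lemma gphi_pos (x : ℝ) : 0 < gphi x := by
  have h : (0:ℝ) < Real.sqrt (2 * Real.pi) := Real.sqrt_pos.2 (mul_pos two_pos Real.pi_pos)
  have := Real.exp_pos (-(x^2)/2)
  unfold gphi
  positivity

lemma gphi_nonneg (x : ℝ) : 0 ≤ gphi x := (gphi_pos x).le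

lemma gphi_le (x : ℝ) : gphi x ≤ (Real.sqrt (2 * Real.pi))⁻¹ := by
  have h1 : Real.exp (-(x^2)/2) ≤ 1 := by
    rw [Real.exp_le_one_iff]; nlinarith [sq_nonneg x]
  have h2 : (0:ℝ) ≤ (Real.sqrt (2 * Real.pi))⁻¹ := by positivity
  calc gphi x ≤ (Real.sqrt (2 * Real.pi))⁻¹ * 1 := mul_le_mul_of_nonneg_left h1 h2
    _ = _ := mul_one _

lemma gphi_continuous : Continuous gphi := by
  unfold gphi; fun_prop

lemma gphi_hasDerivAt (x : ℝ) : HasDerivAt gphi (-x * gphi x) x := by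
  have h : HasDerivAt (fun x : ℝ => -(x^2)/2) (-x) x := by
    have := (hasDerivAt_pow 2 x).neg.div_const 2
    refine this.congr_deriv ?_
    ring
  have h2 := (h.exp).const_mul (Real.sqrt (2 * Real.pi))⁻¹
  refine h2.congr_deriv ?_
  simp [gphi]
  ring

lemma gphi_integrable : Integrable gphi := by
  have : Integrable (fun x : ℝ => Real.exp (-(2⁻¹) * x^2)) := integrable_exp_neg_mul_sq (by norm_num)
  have h := this.const_mul (Real.sqrt (2 * Real.pi))⁻¹
  refine h.congr (Filter.Eventually.of_forall fun x => ?_)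
  simp only [gphi]
  ring_nf

lemma integral_gphi : ∫ x, gphi x = 1 := by
  rw [show (fun x => gphi x) = gaussianPDFReal 0 1 from funext gphi_eq_pdf]
  exact integral_gaussianPDFReal_eq_one 0 one_ne_zero

noncomputable def gF : ℝ → ℝ := fun t => ∫ x in Iic t, gphi x

lemma gF_nonneg (t : ℝ) : 0 ≤ gF t :=
  setIntegral_nonneg measurableSet_Iic fun x _ => gphi_nonneg x

lemma gF_le_one (t : ℝ) : gF t ≤ 1 := by
  rw [← integral_gphi]
  exact setIntegral_le_integral gphi_integrable (Filter.Eventually.of_forall gphi_nonneg)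

lemma gF_eq (t : ℝ) : gF t = (∫ x in (0:ℝ)..t, gphi x) + gF 0 := by
  rw [← intervalIntegral.integral_Iic_sub_Iic gphi_integrable.integrableOn
    gphi_integrable.integrableOn]
  simp [gF]

lemma gF_hasDerivAt (t : ℝ) : HasDerivAt gF (gphi t) t := by
  have h := (gphi_continuous.integral_hasStrictDerivAt 0 t).hasDerivAt.add_const (gF 0)
  exact h.congr_of_eventuallyEq (Filter.Eventually.of_forall fun u => gF_eq u)

lemma gF_continuous : Continuous gF :=
  continuous_iff_continuousAt.2 fun t => (gF_hasDerivAt t).continuousAt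

lemma gF_zero : gF 0 = 1/2 := by
  have h1 : ∫ x in Iic (0:ℝ), gphi x = ∫ x in Ici (0:ℝ), gphi x := by
    have := integral_comp_neg_Iic (0:ℝ) gphi
    simp only [neg_zero] at this
    rw [integral_Ici_eq_integral_Ioi, ← this]
    congr 1
    ext x
    simp [gphi, neg_pow]
  have h2 : (∫ x in Iic (0:ℝ), gphi x) + ∫ x in Ioi (0:ℝ), gphi x = 1 := by
    rw [intervalIntegral.integral_Iic_add_Ioi gphi_integrable.integrableOn gphi_integrable.integrableOn,
      integral_gphi]
  rw [integral_Ici_eq_integral_Ioi] at h1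
  have : gF 0 = ∫ x in Iic (0:ℝ), gphi x := rfl
  linarith [this]


attribute [fun_prop] gphi_continuous gF_continuous

lemma integrable_abs_mul_gphi : Integrable (fun v : ℝ => |v| * gphi v) := by
  have h := ((integrable_mul_exp_neg_mul_sq (b := 2⁻¹) (by norm_num)).abs.const_mul
    (Real.sqrt (2*Real.pi))⁻¹)
  refine h.congr (Filter.Eventually.of_forall fun x => ?_)
  simp only [abs_mul, Real.abs_exp, gphi]
  ring_nf

lemma integrable_of_le_gphi {f : ℝ → ℝ} (hf : AEStronglyMeasurable f volume) (C : ℝ)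
    (h : ∀ x, ‖f x‖ ≤ C * gphi x) : Integrable f :=
  (gphi_integrable.const_mul C).mono' hf (Filter.Eventually.of_forall h)

lemma integrable_of_le_abs_gphi {f : ℝ → ℝ} (hf : AEStronglyMeasurable f volume) (C : ℝ)
    (h : ∀ x, ‖f x‖ ≤ C * (|x| * gphi x)) : Integrable f :=
  (integrable_abs_mul_gphi.const_mul C).mono' hf (Filter.Eventually.of_forall h)

lemma gF_comp_hasDerivAt (a x : ℝ) :
    HasDerivAt (fun x => gF (a*x)) (a * gphi (a*x)) x := by
  have h := (gF_hasDerivAt (a*x)).comp x ((hasDerivAt_id x).const_mul a)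
  have h' : HasDerivAt (fun x => gF (a*x)) (gphi (a*x) * (a * 1)) x := h
  exact h'.congr_deriv (by ring)

lemma gphi_comp_hasDerivAt (a x : ℝ) :
    HasDerivAt (fun x => gphi (a*x)) (-(a^2*x) * gphi (a*x)) x := by
  have h := (gphi_hasDerivAt (a*x)).comp x ((hasDerivAt_id x).const_mul a)
  have h' : HasDerivAt (fun x => gphi (a*x)) (-(a*x) * gphi (a*x) * (a * 1)) x := h
  exact h'.congr_deriv (by ring)

lemma u_hasDerivAt (a x : ℝ) :
    HasDerivAt (fun x => gF (a*x) * gphi (a*x))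
      (a * gphi (a*x)^2 - a^2 * x * (gF (a*x) * gphi (a*x))) x := by
  have h := (gF_comp_hasDerivAt a x).mul (gphi_comp_hasDerivAt a x)
  exact h.congr_deriv (by ring)

lemma negphi_hasDerivAt (x : ℝ) : HasDerivAt (fun v : ℝ => -gphi v) (x * gphi x) x :=
  (gphi_hasDerivAt x).neg.congr_deriv (by ring)

lemma gphi_abs (x : ℝ) : |gphi x| = gphi x := abs_of_pos (gphi_pos x)

lemma gF_abs_le (t : ℝ) : |gF t| ≤ 1 := abs_le.2 ⟨by linarith [gF_nonneg t], gF_le_one t⟩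

lemma integrable_K (a : ℝ) : Integrable (fun x => gF (a*x) * gphi (a*x) * (x * gphi x)) := by
  refine integrable_of_le_abs_gphi (by apply Continuous.aestronglyMeasurable; fun_prop) (Real.sqrt (2*Real.pi))⁻¹ fun x => ?_
  rw [Real.norm_eq_abs, abs_mul, abs_mul, abs_mul, gphi_abs, gphi_abs]
  calc |gF (a*x)| * gphi (a*x) * (|x| * gphi x)
      ≤ 1 * (Real.sqrt (2*Real.pi))⁻¹ * (|x| * gphi x) := by
        apply mul_le_mul_of_nonneg_right
          (mul_le_mul (gF_abs_le _) (gphi_le _) (gphi_nonneg _) (by norm_num))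
          (mul_nonneg (abs_nonneg x) (gphi_nonneg x))
    _ = (Real.sqrt (2*Real.pi))⁻¹ * (|x| * gphi x) := by ring

lemma integrable_A (a : ℝ) : Integrable (fun x => gphi (a*x)^2 * gphi x) := by
  refine integrable_of_le_gphi (by apply Continuous.aestronglyMeasurable; fun_prop) (((Real.sqrt (2*Real.pi))⁻¹)^2) fun x => ?_
  rw [Real.norm_eq_abs, abs_mul, abs_pow, gphi_abs, gphi_abs]
  exact mul_le_mul_of_nonneg_right
    (pow_le_pow_left₀ (gphi_nonneg _) (gphi_le _) 2) (gphi_nonneg x)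

lemma K_identity (a : ℝ) :
    (1 + a^2) * ∫ x, gF (a*x) * gphi (a*x) * (x * gphi x)
      = a * ∫ x, gphi (a*x)^2 * gphi x := by
  have huv : Integrable (fun x => (fun x => gF (a*x) * gphi (a*x)) x * (fun x => -gphi x) x) := by
    refine integrable_of_le_gphi (by apply Continuous.aestronglyMeasurable; fun_prop) (Real.sqrt (2*Real.pi))⁻¹ fun x => ?_
    show ‖gF (a*x) * gphi (a*x) * -gphi x‖ ≤ _
    rw [Real.norm_eq_abs, abs_mul, abs_neg, abs_mul, gphi_abs, gphi_abs]
    calc |gF (a*x)| * gphi (a*x) * gphi x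
        ≤ 1 * (Real.sqrt (2*Real.pi))⁻¹ * gphi x := by
          apply mul_le_mul_of_nonneg_right
            (mul_le_mul (gF_abs_le _) (gphi_le _) (gphi_nonneg _) (by norm_num)) (gphi_nonneg x)
      _ = _ := by ring
  have hu'v : Integrable (fun x =>
      (fun x => a * gphi (a*x)^2 - a^2 * x * (gF (a*x) * gphi (a*x))) x * (fun x => -gphi x) x) := by
    have h1 : Integrable (fun x => -(a * (gphi (a*x)^2 * gphi x))) :=
      ((integrable_A a).const_mul a).neg'
    have h2 : Integrable (fun x => a^2 * (gF (a*x) * gphi (a*x) * (x * gphi x))) :=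
      (integrable_K a).const_mul (a^2)
    refine (h1.add h2).congr (Filter.Eventually.of_forall fun x => ?_)
    show -(a * (gphi (a*x)^2 * gphi x)) + a^2 * (gF (a*x) * gphi (a*x) * (x * gphi x)) = _
    ring
  have hparts := integral_mul_deriv_eq_deriv_mul_of_integrable
    (u := fun x => gF (a*x) * gphi (a*x)) (v := fun x => -gphi x)
    (u' := fun x => a * gphi (a*x)^2 - a^2 * x * (gF (a*x) * gphi (a*x)))
    (v' := fun x => x * gphi x)
    (fun x _ => u_hasDerivAt a x) (fun x _ => negphi_hasDerivAt x)
    ((integrable_K a).congr (Filter.Eventually.of_forall fun x => rfl))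
    (hu'v.congr (Filter.Eventually.of_forall fun x => rfl))
    (huv.congr (Filter.Eventually.of_forall fun x => rfl))
  have hsplit : ∫ x, (a * gphi (a*x)^2 - a^2 * x * (gF (a*x) * gphi (a*x))) * (-gphi x)
      = -(a * ∫ x, gphi (a*x)^2 * gphi x) + a^2 * ∫ x, gF (a*x) * gphi (a*x) * (x * gphi x) := by
    have h1 : Integrable (fun x => -(a * (gphi (a*x)^2 * gphi x))) :=
      ((integrable_A a).const_mul a).neg'
    have h2 : Integrable (fun x => a^2 * (gF (a*x) * gphi (a*x) * (x * gphi x))) :=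
      (integrable_K a).const_mul (a^2)
    rw [show (fun x => (a * gphi (a*x)^2 - a^2 * x * (gF (a*x) * gphi (a*x))) * (-gphi x))
        = fun x => (-(a * (gphi (a*x)^2 * gphi x)))
            + a^2 * (gF (a*x) * gphi (a*x) * (x * gphi x))
        from funext fun x => by ring]
    rw [integral_add h1 h2, integral_neg, integral_const_mul, integral_const_mul]
  have hK : ∫ x, gF (a*x) * gphi (a*x) * (x * gphi x)
      = -∫ x, (a * gphi (a*x)^2 - a^2 * x * (gF (a*x) * gphi (a*x))) * (-gphi x) := hparts
  rw [hsplit] at hK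
  linarith [hK]

lemma sqrt_2pi_pos : (0:ℝ) < Real.sqrt (2*Real.pi) := Real.sqrt_pos.2 (by positivity)

lemma A_eq (a : ℝ) : ∫ x, gphi (a*x)^2 * gphi x
    = 1 / (2 * Real.pi * Real.sqrt (1 + 2*a^2)) := by
  have hfun : (fun x => gphi (a*x)^2 * gphi x)
      = fun x => ((Real.sqrt (2*Real.pi))⁻¹)^3 * Real.exp (-((1+2*a^2)/2) * x^2) := by
    funext x
    simp only [gphi]
    rw [mul_pow, sq (Real.exp _), ← Real.exp_add, mul_mul_mul_comm, ← Real.exp_add]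
    ring_nf
  rw [hfun, integral_const_mul, integral_gaussian]
  have h1 : (0:ℝ) < 1 + 2*a^2 := by positivity
  have h2 : Real.pi / ((1+2*a^2)/2) = (2*Real.pi) / (1+2*a^2) := by
    rw [div_div_eq_mul_div]; ring_nf
  rw [h2]
  rw [show (2*Real.pi) / (1+2*a^2) = (2*Real.pi) * (1+2*a^2)⁻¹ by ring,
    Real.sqrt_mul (by positivity : (0:ℝ) ≤ 2*Real.pi) ((1+2*a^2)⁻¹), Real.sqrt_inv]
  have hs2 : Real.sqrt (2*Real.pi) ^ 2 = 2*Real.pi := Real.sq_sqrt (by positivity)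
  have hsne : Real.sqrt (2*Real.pi) ≠ 0 := ne_of_gt sqrt_2pi_pos
  have h4 : ((Real.sqrt (2*Real.pi))⁻¹)^3 * Real.sqrt (2*Real.pi) = (2*Real.pi)⁻¹ := by
    rw [pow_succ, mul_assoc, inv_mul_cancel₀ hsne, mul_one, inv_pow, hs2]
  rw [← mul_assoc, h4]
  have h5 : Real.sqrt (1+2*a^2) ≠ 0 := ne_of_gt (Real.sqrt_pos.2 h1)
  rw [one_div, mul_inv, mul_inv]
  ring

lemma J_hasDerivAt (a : ℝ) :
    HasDerivAt (fun a : ℝ => ∫ v, gF (a*v)^2 * gphi v)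
      (a / (Real.pi * (1+a^2) * Real.sqrt (1+2*a^2))) a := by
  have h_diff : ∀ v : ℝ, ∀ x ∈ Metric.ball a 1,
      HasDerivAt (fun y => gF (y*v)^2 * gphi v)
        (2 * (gF (x*v) * gphi (x*v)) * v * gphi v) x := by
    intro v x _
    have h1 : HasDerivAt (fun y : ℝ => gF (y*v)) (v * gphi (x*v)) x := by
      have h := (gF_hasDerivAt (x*v)).comp x ((hasDerivAt_id x).mul_const v)
      have h' : HasDerivAt (fun y => gF (y*v)) (gphi (x*v) * (1 * v)) x := h
      exact h'.congr_deriv (by ring)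
    have h2 := (h1.pow 2).mul_const (gphi v)
    exact h2.congr_deriv (by show (2:ℕ) * gF (x*v) ^ (2-1) * (v * gphi (x*v)) * gphi v = _; push_cast; ring)
  have key := hasDerivAt_integral_of_dominated_loc_of_deriv_le
    (F := fun x v => gF (x*v)^2 * gphi v)
    (F' := fun x v => 2 * (gF (x*v) * gphi (x*v)) * v * gphi v)
    (x₀ := a) (s := Metric.ball a 1) (μ := volume)
    (bound := fun v => 2 * (Real.sqrt (2*Real.pi))⁻¹ * (|v| * gphi v))
    (Metric.ball_mem_nhds a one_pos)
    (Filter.Eventually.of_forall fun x =>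
      (by apply Continuous.aestronglyMeasurable; fun_prop :
        AEStronglyMeasurable (fun v => gF (x*v)^2 * gphi v) volume))
    (by
      refine integrable_of_le_gphi (by apply Continuous.aestronglyMeasurable; fun_prop) 1 fun v => ?_
      rw [Real.norm_eq_abs, abs_mul, abs_pow, gphi_abs, one_mul]
      have := pow_le_pow_left₀ (abs_nonneg _) (gF_abs_le (a*v)) 2
      calc |gF (a*v)|^2 * gphi v ≤ 1^2 * gphi v := by
            apply mul_le_mul_of_nonneg_right this (gphi_nonneg v)
        _ = gphi v := by ring)
    (by apply Continuous.aestronglyMeasurable; fun_prop)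
    (Filter.Eventually.of_forall fun v => by
      intro x _
      rw [Real.norm_eq_abs, abs_mul, abs_mul, abs_mul, gphi_abs]
      have h1 : |gF (x*v) * gphi (x*v)| ≤ (Real.sqrt (2*Real.pi))⁻¹ := by
        rw [abs_mul, gphi_abs]
        calc |gF (x*v)| * gphi (x*v) ≤ 1 * (Real.sqrt (2*Real.pi))⁻¹ :=
              mul_le_mul (gF_abs_le _) (gphi_le _) (gphi_nonneg _) one_pos.le
          _ = _ := one_mul _
      calc |2| * |gF (x*v) * gphi (x*v)| * |v| * gphi v
          ≤ |2| * (Real.sqrt (2*Real.pi))⁻¹ * |v| * gphi v := by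
            apply mul_le_mul_of_nonneg_right (mul_le_mul_of_nonneg_right
              (mul_le_mul_of_nonneg_left h1 (abs_nonneg 2)) (abs_nonneg v)) (gphi_nonneg v)
        _ = 2 * (Real.sqrt (2*Real.pi))⁻¹ * (|v| * gphi v) := by
            rw [abs_two]; ring)
    (integrable_abs_mul_gphi.const_mul _)
    (Filter.Eventually.of_forall fun v x hx => h_diff v x hx)
  have hrw : (fun v => 2 * (gF (a*v) * gphi (a*v)) * v * gphi v)
      = fun v => 2 * (gF (a*v) * gphi (a*v) * (v * gphi v)) := funext fun v => by ring
  have hval : ∫ v, 2 * (gF (a*v) * gphi (a*v)) * v * gphi v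
      = a / (Real.pi * (1+a^2) * Real.sqrt (1+2*a^2)) := by
    rw [hrw, integral_const_mul]
    have hKid := K_identity a
    rw [A_eq a] at hKid
    have h1 : (0:ℝ) < 1+a^2 := by positivity
    have h2 : (0:ℝ) < Real.sqrt (1+2*a^2) := Real.sqrt_pos.2 (by positivity)
    have h3 : (0:ℝ) < Real.pi := Real.pi_pos
    field_simp at hKid ⊢
    nlinarith [hKid]
  rw [← hval]
  exact key.2

lemma R_hasDerivAt (a : ℝ) :
    HasDerivAt (fun a : ℝ => 1 / Real.pi * Real.arctan (Real.sqrt (1 + 2*a^2)))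
      (a / (Real.pi * (1+a^2) * Real.sqrt (1+2*a^2))) a := by
  have h1 : (0:ℝ) < 1 + 2*a^2 := by positivity
  have hinner : HasDerivAt (fun a : ℝ => 1 + 2*a^2) (4*a) a := by
    have := ((hasDerivAt_pow 2 a).const_mul 2).const_add 1
    exact this.congr_deriv (by push_cast; ring)
  have hsqrt : HasDerivAt (fun a : ℝ => Real.sqrt (1 + 2*a^2))
      (4*a / (2 * Real.sqrt (1 + 2*a^2))) a := by
    have h := (Real.hasDerivAt_sqrt (ne_of_gt h1)).comp a hinner
    have h' : HasDerivAt (fun a : ℝ => Real.sqrt (1 + 2*a^2))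
        (1 / (2 * Real.sqrt (1 + 2*a^2)) * (4*a)) a := h
    exact h'.congr_deriv (by ring)
  have harctan := (Real.hasDerivAt_arctan (Real.sqrt (1 + 2*a^2))).comp a hsqrt
  have harctan' : HasDerivAt (fun a : ℝ => Real.arctan (Real.sqrt (1 + 2*a^2)))
      (1 / (1 + Real.sqrt (1 + 2*a^2)^2) * (4*a / (2 * Real.sqrt (1 + 2*a^2)))) a := harctan
  have hfin := harctan'.const_mul (1 / Real.pi)
  refine hfin.congr_deriv ?_
  rw [Real.sq_sqrt h1.le]
  have h2 : Real.sqrt (1 + 2*a^2) ≠ 0 := ne_of_gt (Real.sqrt_pos.2 h1)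
  have h3 : Real.pi ≠ 0 := ne_of_gt Real.pi_pos
  field_simp
  ring

lemma J_zero : ∫ v, gF ((0:ℝ)*v)^2 * gphi v = 1/4 := by
  have : (fun v => gF ((0:ℝ)*v)^2 * gphi v) = fun v => (1/4) * gphi v := by
    funext v
    rw [zero_mul, gF_zero]
    norm_num
  rw [this, integral_const_mul, integral_gphi]
  norm_num

lemma J_eq_R (a : ℝ) : ∫ v, gF (a*v)^2 * gphi v
    = 1 / Real.pi * Real.arctan (Real.sqrt (1 + 2*a^2)) := by
  set g : ℝ → ℝ := fun a =>
    (∫ v, gF (a*v)^2 * gphi v) - 1 / Real.pi * Real.arctan (Real.sqrt (1 + 2*a^2)) with hg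
  have hd : ∀ x, HasDerivAt g 0 x := fun x => by
    have h := (J_hasDerivAt x).sub (R_hasDerivAt x)
    rw [sub_self] at h
    exact h
  have hconst : g a = g 0 :=
    is_const_of_deriv_eq_zero (fun x => (hd x).differentiableAt)
      (fun x => (hd x).deriv) a 0
  have hzero : g 0 = 0 := by
    rw [hg]
    simp only
    rw [J_zero]
    norm_num [Real.arctan_one]
    field_simp
    ring
  have : g a = 0 := hconst.trans hzero
  rw [hg] at this
  simp only at this
  linarith [this]

lemma gaussian_Iic (t : ℝ) : gaussianReal 0 1 (Iic t) = ENNReal.ofReal (gF t) := by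
  rw [gaussianReal_of_var_ne_zero 0 one_ne_zero,
    withDensity_apply _ measurableSet_Iic]
  have h1 : ∀ᵐ x ∂(volume.restrict (Iic t)), 0 ≤ gphi x :=
    Filter.Eventually.of_forall gphi_nonneg
  have h2 : IntegrableOn gphi (Iic t) := gphi_integrable.integrableOn
  have h3 := ofReal_integral_eq_lintegral_ofReal h2 h1
  have h4 : ∀ x : ℝ, gaussianPDF 0 1 x = ENNReal.ofReal (gphi x) := by
    intro x
    rw [gaussianPDF, gphi_eq_pdf]
  simp only [h4]
  rw [gF, ← h3]

/-- **A Gaussian orthant-type probability.** If `U, U', V` are independent standard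
Gaussian random variables, then for every `a ∈ ℝ`,
`P(U ≤ aV, U' ≤ aV) = (1/π) arctan √(1 + 2a²)`. -/
theorem gaussian_double_comparison_probability
    {Ω : Type*} [m0 : MeasurableSpace Ω] (P : Measure Ω) [IsProbabilityMeasure P]
    (U U' V : Ω → ℝ) (hU : Measurable U) (hU' : Measurable U') (hV : Measurable V)
    (hindep : iIndepFun ![U, U', V] P)
    (hUlaw : Measure.map U P = gaussianReal 0 1)
    (hU'law : Measure.map U' P = gaussianReal 0 1)
    (hVlaw : Measure.map V P = gaussianReal 0 1) :
    ∀ a : ℝ, (P {ω | U ω ≤ a * V ω ∧ U' ω ≤ a * V ω}).toReal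
      = 1 / Real.pi * Real.arctan (Real.sqrt (1 + 2 * a ^ 2)) := by
  intro a
  set γ := gaussianReal 0 1 with hγ
  have hm : ∀ i, Measurable (![U, U', V] i) := by
    intro i; fin_cases i <;> assumption
  have hUU' : IndepFun U U' P := hindep.indepFun (show (0 : Fin 3) ≠ 1 by decide)
  have hpair : IndepFun (fun ω => (U ω, U' ω)) V P :=
    hindep.indepFun_prodMk hm 0 1 2 (by decide) (by decide)
  have hVpair : IndepFun V (fun ω => (U ω, U' ω)) P := hpair.symm
  have mapUU' : Measure.map (fun ω => (U ω, U' ω)) P = γ.prod γ := by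
    rw [(indepFun_iff_map_prod_eq_prod_map_map hU.aemeasurable hU'.aemeasurable).mp hUU',
      hUlaw, hU'law]
  have mapBig : Measure.map (fun ω => (V ω, (U ω, U' ω))) P = γ.prod (γ.prod γ) := by
    rw [(indepFun_iff_map_prod_eq_prod_map_map hV.aemeasurable
      (hU.prodMk hU').aemeasurable).mp hVpair, hVlaw, mapUU']
  set T : Set (ℝ × ℝ × ℝ) := {p | p.2.1 ≤ a * p.1 ∧ p.2.2 ≤ a * p.1} with hT
  have hTmeas : MeasurableSet T := by
    apply MeasurableSet.inter
    · exact measurableSet_le (measurable_snd.fst) (measurable_const.mul measurable_fst)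
    · exact measurableSet_le (measurable_snd.snd) (measurable_const.mul measurable_fst)
  have hPS : P {ω | U ω ≤ a * V ω ∧ U' ω ≤ a * V ω} = (γ.prod (γ.prod γ)) T := by
    rw [show {ω | U ω ≤ a * V ω ∧ U' ω ≤ a * V ω} = (fun ω => (V ω, (U ω, U' ω))) ⁻¹' T from rfl,
      ← Measure.map_apply (hV.prodMk (hU.prodMk hU')) hTmeas, mapBig]
  have hslice : ∀ v : ℝ, (Prod.mk v ⁻¹' T : Set (ℝ × ℝ)) = Iic (a*v) ×ˢ Iic (a*v) := by
    intro v; ext q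
    simp [hT, Prod.le_def]
  have hPT : (γ.prod (γ.prod γ)) T = ∫⁻ v, ENNReal.ofReal (gF (a*v)^2) ∂γ := by
    rw [Measure.prod_apply hTmeas]
    congr 1
    funext v
    rw [hslice v, Measure.prod_prod]
    rw [hγ, gaussian_Iic, ← ENNReal.ofReal_mul (gF_nonneg _), sq]
  have hInt : ∫ v, gF (a*v)^2 ∂γ = ((∫⁻ v, ENNReal.ofReal (gF (a*v)^2) ∂γ)).toReal :=
    integral_eq_lintegral_of_nonneg_ae (Filter.Eventually.of_forall fun v => sq_nonneg _)
      (((gF_continuous.comp (continuous_const.mul continuous_id)).pow 2).aestronglyMeasurable)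
  have hvol : ∫ v, gF (a*v)^2 ∂γ = ∫ v, gF (a*v)^2 * gphi v := by
    rw [hγ, gaussianReal_of_var_ne_zero 0 one_ne_zero]
    have hd : (gaussianPDF 0 1) = fun x => ((Real.toNNReal (gphi x) : ℝ≥0) : ℝ≥0∞) := by
      funext x; rw [gaussianPDF, gphi_eq_pdf]; rfl
    rw [hd, integral_withDensity_eq_integral_smul
      (gphi_continuous.measurable.real_toNNReal) _]
    congr 1
    funext v
    rw [NNReal.smul_def, smul_eq_mul, Real.coe_toNNReal _ (gphi_nonneg v)]
    ring
  rw [hPS, hPT, ← hInt, hvol, J_eq_R a]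
end
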